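/- arXiv:2002.06469 — 2 statements merged into one kernel-verified Lean document; each statement's English description precedes it below -/
import Mathlib

section
/- Let β ∈ (0,1) and let ℓ ≥ 2^(β/(1−β)). Then for every positive integer i, 2^(Σ_{j=1}^{i} β^j) · ℓ^(β^i) ≤ 2^(Σ_{k=1}^{i−1} β^k) · ℓ^(β^(i−1)). -/
/-! Write `s_i = ∑_{j=1}^{i} β^j`. Since `s_i = s_{i-1} + β^i`, the claim is
`(2ℓ)^(β^i) ≤ ℓ^(β^(i-1))`, i.e. `(2ℓ)^β ≤ ℓ` raised to the power `β^(i-1) ≥ 0`;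
and `(2ℓ)^β ≤ ℓ` is `2^β ≤ ℓ^(1-β)`, which is the hypothesis on `ℓ` raised to the power `1 - β`. -/

open Finset

namespace Real

theorem mul_rpow_le_of_rpow_div_one_sub_le {c ℓ β : ℝ} (hc : 0 < c) (hβ : β < 1)
    (hℓ : c ^ (β / (1 - β)) ≤ ℓ) : (c * ℓ) ^ β ≤ ℓ := by
  have hℓ0 : 0 < ℓ := (rpow_pos_of_pos hc _).trans_le hℓ
  have hcβ : c ^ β ≤ ℓ ^ (1 - β) :=
    calc c ^ β = (c ^ (β / (1 - β))) ^ (1 - β) := by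
          rw [← rpow_mul hc.le, div_mul_cancel₀ _ (sub_ne_zero.mpr hβ.ne')]
      _ ≤ ℓ ^ (1 - β) := rpow_le_rpow (rpow_nonneg hc.le _) hℓ (sub_nonneg.mpr hβ.le)
  calc (c * ℓ) ^ β = c ^ β * ℓ ^ β := mul_rpow hc.le hℓ0.le
    _ ≤ ℓ ^ (1 - β) * ℓ ^ β := by gcongr
    _ = ℓ := by rw [← rpow_add hℓ0, sub_add_cancel, rpow_one]

theorem mul_rpow_pow_succ_le_rpow_pow {c ℓ β : ℝ} (hc : 0 < c) (hβ0 : 0 ≤ β) (hβ1 : β < 1)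
    (hℓ : c ^ (β / (1 - β)) ≤ ℓ) (m : ℕ) : (c * ℓ) ^ (β ^ (m + 1)) ≤ ℓ ^ (β ^ m) := by
  have hℓ0 : 0 < ℓ := (rpow_pos_of_pos hc _).trans_le hℓ
  rw [pow_succ', rpow_mul (mul_pos hc hℓ0).le]
  exact rpow_le_rpow (rpow_nonneg (mul_pos hc hℓ0).le _)
    (mul_rpow_le_of_rpow_div_one_sub_le hc hβ1 hℓ) (pow_nonneg hβ0 m)

end Real

theorem merge_reduce_level_general (β ℓ : ℝ) (hβ0 : 0 < β) (hβ1 : β < 1)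
    (hℓ : (2 : ℝ) ^ (β / (1 - β)) ≤ ℓ) (i : ℕ) :
    (2 : ℝ) ^ (∑ j ∈ Finset.Icc 1 i, β ^ j) * ℓ ^ (β ^ i) ≤
      (2 : ℝ) ^ (∑ k ∈ Finset.Icc 1 (i - 1), β ^ k) * ℓ ^ (β ^ (i - 1)) := by
  cases i with
  | zero => rfl
  | succ m =>
    have hℓ0 : 0 ≤ ℓ := (Real.rpow_nonneg zero_le_two _).trans hℓ
    rw [Nat.add_sub_cancel, sum_Icc_succ_top (Nat.le_add_left 1 m), Real.rpow_add two_pos,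
      mul_assoc, ← Real.mul_rpow zero_le_two hℓ0]
    gcongr
    exact Real.mul_rpow_pow_succ_le_rpow_pow two_pos hβ0.le hβ1 hℓ m

theorem merge_reduce_level (β ℓ : ℝ) (hβ0 : 0 < β) (hβ1 : β < 1)
    (hℓ : (2 : ℝ) ^ (β / (1 - β)) ≤ ℓ) (i : ℕ) (hi : 1 ≤ i) :
    (2 : ℝ) ^ (∑ j ∈ Finset.Icc 1 i, β ^ j) * ℓ ^ (β ^ i) ≤
      (2 : ℝ) ^ (∑ k ∈ Finset.Icc 1 (i - 1), β ^ k) * ℓ ^ (β ^ (i - 1)) :=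
  merge_reduce_level_general β ℓ hβ0 hβ1 hℓ i
end

section
/- Let d ≥ 2 be even, n = C(d, d/2), and let P ⊆ ℝ^(d+1) × {±1} be the set of all labeled points p = (x, y) where x ∈ ℝ^d × {1}, exactly d/2 of the first d coordinates of x equal y·√(2/d) and the remaining d/2 of the first d coordinates equal 0, and the (d+1)-th coordinate equals 1 (with at least one point of each label). Then for every p ∈ P there exists w ∈ ℝ^(d+1) with ‖w_{1:d}‖² = d²/4 such that the hinge loss h(p, w) = max(1 − y⟨x, w⟩, 0) = 1 while h(q, w) = 0 for every q ∈ P with q ≠ p. -/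
/-- The hard instance point: among the first `d` coordinates, those indexed by `S`
equal `y * √(2/d)`, the rest are `0`, and the `(d+1)`-th coordinate equals `1`. -/
noncomputable def hardPoint (d : ℕ) (S : Finset (Fin d)) (y : ℝ) : Fin (d + 1) → ℝ :=
  fun i => if h : (i : ℕ) < d then (if (⟨i, h⟩ : Fin d) ∈ S then y * Real.sqrt (2 / d) else 0)
    else 1

/-!
The witness for `S₀` vanishes on `S₀` and on the bias coordinate and equals `√(d/2)` elsewhere,
so against the point of `S` it picks up `y * √(2/d) * √(d/2) = y` once for every index of
`S \ S₀`: the margin `y⟨x, w⟩` is `0` at `S₀` and `#(S \ S₀) ≥ 1` at every other `S` of the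
same size.
-/

open Finset

noncomputable def hardWitness (d : ℕ) (S₀ : Finset (Fin d)) : Fin (d + 1) → ℝ :=
  Fin.snoc (fun i : Fin d => if i ∈ S₀ then 0 else Real.sqrt (d / 2)) 0

section

variable {d : ℕ}

@[simp]
theorem hardPoint_castSucc (S : Finset (Fin d)) (y : ℝ) (i : Fin d) :
    hardPoint d S y i.castSucc = if i ∈ S then y * Real.sqrt (2 / d) else 0 := by
  simp [hardPoint]

@[simp]
theorem hardWitness_castSucc (S₀ : Finset (Fin d)) (i : Fin d) :
    hardWitness d S₀ i.castSucc = if i ∈ S₀ then 0 else Real.sqrt (d / 2) := by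
  simp [hardWitness]

@[simp]
theorem hardWitness_last (S₀ : Finset (Fin d)) : hardWitness d S₀ (Fin.last d) = 0 := by
  simp [hardWitness]

theorem sum_sq_hardWitness (S₀ : Finset (Fin d)) :
    ∑ i : Fin d, hardWitness d S₀ i.castSucc ^ 2 = ((d - #S₀ : ℕ) : ℝ) * (d / 2) := by
  have hsq : Real.sqrt (d / 2) ^ 2 = (d : ℝ) / 2 := Real.sq_sqrt (by positivity)
  simp only [hardWitness_castSucc, apply_ite (· ^ 2), hsq]
  simp [sum_ite, filter_not, ← compl_eq_univ_sdiff, card_compl]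

theorem sum_hardPoint_mul_hardWitness (hd : d ≠ 0) (S S₀ : Finset (Fin d)) (y : ℝ) :
    ∑ i, hardPoint d S y i * hardWitness d S₀ i = y * #(S \ S₀) := by
  have hsqrt : Real.sqrt (2 / d) * Real.sqrt (d / 2) = 1 := by
    rw [← Real.sqrt_mul (by positivity), div_mul_div_comm, mul_comm 2, div_self (by positivity),
      Real.sqrt_one]
  have hterm : ∀ i : Fin d, hardPoint d S y i.castSucc * hardWitness d S₀ i.castSucc
      = if i ∈ S \ S₀ then y else 0 := by
    intro i
    by_cases hS : i ∈ S <;> by_cases hS₀ : i ∈ S₀ <;>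
      simp only [hardPoint_castSucc, hardWitness_castSucc, mem_sdiff, hS, hS₀, if_true, if_false,
        false_and, not_true, not_false_eq_true, and_self, and_false, mul_zero, zero_mul,
        mul_assoc, hsqrt, mul_one]
  rw [Fin.sum_univ_castSucc, hardWitness_last, mul_zero, add_zero, sum_congr rfl fun i _ => hterm i,
    sum_ite_mem, univ_inter, sum_const, nsmul_eq_mul, mul_comm]

end

theorem Finset.sdiff_nonempty_of_card_eq {α : Type*} [DecidableEq α] {s t : Finset α}
    (hcard : #s = #t) (hne : s ≠ t) : (s \ t).Nonempty :=
  sdiff_nonempty.mpr fun hst => hne (eq_of_subset_of_card_le hst hcard.ge)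

theorem hard_instance_witness (d : ℕ) (hd2 : 2 ≤ d) (hdEven : Even d)
    (yl : Finset (Fin d) → ℝ) (hyl : ∀ S, yl S = 1 ∨ yl S = -1)
    (S₀ : Finset (Fin d)) (hS₀ : S₀.card = d / 2) :
    ∃ w : Fin (d + 1) → ℝ,
      (∑ i : Fin d, (w i.castSucc) ^ 2 = (d : ℝ) ^ 2 / 4) ∧
      max (1 - yl S₀ * ∑ i, hardPoint d S₀ (yl S₀) i * w i) 0 = 1 ∧
      ∀ S : Finset (Fin d), S.card = d / 2 → S ≠ S₀ →
        max (1 - yl S * ∑ i, hardPoint d S (yl S) i * w i) 0 = 0 := by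
  have hd : d ≠ 0 := by omega
  refine ⟨hardWitness d S₀, ?_, ?_, fun S hS hne => ?_⟩
  · obtain ⟨k, rfl⟩ := hdEven
    rw [sum_sq_hardWitness, hS₀, show k + k - (k + k) / 2 = k by omega]
    push_cast
    ring
  · simp [sum_hardPoint_mul_hardWitness hd]
  · have hy : yl S * yl S = 1 := by rcases hyl S with h | h <;> simp [h]
    have hmargin : (1 : ℝ) ≤ #(S \ S₀) :=
      mod_cast (sdiff_nonempty_of_card_eq (hS.trans hS₀.symm) hne).card_pos
    rw [sum_hardPoint_mul_hardWitness hd, ← mul_assoc, hy, one_mul, max_eq_right (by linarith)]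
end
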